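/- Suppose the real random variable L(X) satisfies the tail asymptotic lim_{u→∞} log P(L(X) > u) / Λ(u^{1/ρ}) = −I* with I* > 0, where Λ:(0,∞)→(0,∞) is eventually strictly increasing, Λ(x) → ∞, and Λ ∈ RV(α) for some α > 0. Then the naive asymptotic CVaR variance σ_c²(β) = β^{−2} Var[(L(X) − v_β)^+] satisfies: for every δ > 0 there exists β_0 > 0 such that σ_c²(β) ≥ β^{−1+δ} for all β ∈ (0, β_0). -/

import Mathlib

open MeasureTheory Filter Real Topology ProbabilityTheory

/-- A function `f : (0,∞) → (0,∞)` is regularly varying with index `p`. -/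
def RegVary (f : ℝ → ℝ) (p : ℝ) : Prop :=
  ∀ x : ℝ, 0 < x → Tendsto (fun t => f (t * x) / f t) atTop (𝓝 (x ^ p))

/-- Value at risk at tail probability level `β` of the random variable `Z`. -/
noncomputable def VaR {Ω : Type*} [MeasurableSpace Ω] (μ : Measure Ω) (Z : Ω → ℝ) (β : ℝ) : ℝ :=
  sInf {u : ℝ | 1 - β ≤ (μ {ω | Z ω ≤ u}).toReal}

/-!
Write `G u = P(Z > u)`. Regular variation of index `α > 0` gives a Potter bound
`Λ t ≥ c t ^ (α / 2)`, so `G` decays faster than any power and every excess `(Z - v)⁺` is square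
integrable. It also gives `log G (C u) / log G u → C ^ (α / ρ)`, hence `G (C u) ≥ G u ^ (1 + δ)` for
large `u` once `1 < C` and `C ^ (α / ρ) < 1 + δ`. As `β → 0` the quantile `v = v_β` tends to
infinity, `(Z - v)⁺` vanishes with probability `≥ 1 - β` and exceeds `2` with probability
`≥ G (v - 1) ^ (1 + δ) ≥ β ^ (1 + δ)`, so by Chebyshev's inequality its variance is `≥ β ^ (1 + δ)`.
-/

open Set

namespace RegVary

variable {Λ : ℝ → ℝ} {α : ℝ}

theorem exists_const_mul_rpow_le {ε x₀ : ℝ} (hΛ : RegVary Λ α)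
    (hΛpos : ∀ x, 0 < x → 0 < Λ x) (hmono : MonotoneOn Λ (Ici x₀)) (hε : 0 ≤ ε) (hεα : ε < α) :
    ∃ c, 0 < c ∧ ∀ᶠ t in atTop, c * t ^ ε ≤ Λ t := by
  obtain ⟨T₀, hT₀⟩ : ∃ T₀, ∀ t ≥ T₀, 2 ^ ε ≤ Λ (t * 2) / Λ t := eventually_atTop.1 <|
    (hΛ 2 two_pos).eventually (eventually_ge_nhds (rpow_lt_rpow_of_exponent_lt one_lt_two hεα))
  set T := max T₀ (max x₀ 1)
  have hTT₀ : T₀ ≤ T := le_max_left _ _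
  have hTx₀ : x₀ ≤ T := (le_max_left _ _).trans (le_max_right _ _)
  have hTpos : 0 < T := zero_lt_one.trans_le ((le_max_right _ _).trans (le_max_right _ _))
  set c := Λ T / (2 * T) ^ ε
  have hc : 0 < c := div_pos (hΛpos T hTpos) (by positivity)
  refine ⟨c, hc, ?_⟩
  have hbase : ∀ t, T ≤ t → t ≤ 2 * T → c * t ^ ε ≤ Λ t := fun t hTt ht2 =>
    calc c * t ^ ε ≤ c * (2 * T) ^ ε := by gcongr; linarith
      _ = Λ T := div_mul_cancel₀ _ (by positivity)
      _ ≤ Λ t := hmono hTx₀ (hTx₀.trans hTt) hTt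
  -- Doubling, `Λ (2 t) ≥ 2 ^ ε Λ t`, carries the bound from `[T, 2 T]` to `[T, 2 ^ n T]`.
  have hdyadic : ∀ n : ℕ, ∀ t, T ≤ t → t ≤ 2 ^ n * T → c * t ^ ε ≤ Λ t := by
    intro n
    induction n with
    | zero => exact fun t hTt ht => hbase t hTt (by linarith)
    | succ n ih =>
      intro t hTt ht
      rcases le_or_gt t (2 * T) with h2T | h2T
      · exact hbase t hTt h2T
      have hhalf := ih (t / 2) (by linarith) (by rw [pow_succ] at ht; linarith)
      have hΛhalf : 0 < Λ (t / 2) := hΛpos _ (by linarith)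
      calc c * t ^ ε = c * (t / 2) ^ ε * 2 ^ ε := by
            rw [mul_assoc, ← mul_rpow (by linarith) zero_le_two, div_mul_cancel₀ _ two_ne_zero]
        _ ≤ Λ (t / 2) * (Λ (t / 2 * 2) / Λ (t / 2)) := by
            gcongr
            exact hT₀ _ (by linarith)
        _ = Λ t := by rw [mul_div_cancel₀ _ hΛhalf.ne', div_mul_cancel₀ _ two_ne_zero]
  filter_upwards [eventually_ge_atTop T] with t hTt
  obtain ⟨n, hn⟩ := pow_unbounded_of_one_lt (t / T) one_lt_two
  exact hdyadic n t hTt ((div_lt_iff₀ hTpos).1 hn).le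

variable {G : ℝ → ℝ} {ρ Istar : ℝ}

theorem tendsto_log_comp_mul_div_log (hΛ : RegVary Λ α) (hΛpos : ∀ x, 0 < x → 0 < Λ x)
    (hρ : 0 < ρ) (hIstar : Istar ≠ 0)
    (htail : Tendsto (fun u => log (G u) / Λ (u ^ (1 / ρ))) atTop (𝓝 (-Istar)))
    {x : ℝ} (hx : 0 < x) :
    Tendsto (fun u => log (G (x * u)) / log (G u)) atTop (𝓝 (x ^ (α / ρ))) := by
  have hdil : Tendsto (fun u => log (G (x * u)) / Λ ((x * u) ^ (1 / ρ))) atTop (𝓝 (-Istar)) :=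
    htail.comp (tendsto_id.const_mul_atTop hx)
  have hratio : Tendsto (fun u => Λ ((x * u) ^ (1 / ρ)) / Λ (u ^ (1 / ρ))) atTop
      (𝓝 (x ^ (α / ρ))) := by
    have h := (hΛ _ (rpow_pos_of_pos hx (1 / ρ))).comp
      (tendsto_rpow_atTop (by positivity : 0 < 1 / ρ))
    rw [← rpow_mul hx.le, one_div_mul_eq_div] at h
    refine h.congr' ?_
    filter_upwards [eventually_ge_atTop 0] with u hu
    simp only [Function.comp_apply, mul_rpow hx.le hu, mul_comm]
  have hinv : Tendsto (fun u => Λ (u ^ (1 / ρ)) / log (G u)) atTop (𝓝 (-Istar)⁻¹) := by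
    simpa only [Pi.inv_apply, inv_div] using htail.inv₀ (neg_ne_zero.2 hIstar)
  have hlim := (hdil.mul hratio).mul hinv
  rw [mul_comm (-Istar), mul_assoc, mul_inv_cancel₀ (neg_ne_zero.2 hIstar), mul_one] at hlim
  refine hlim.congr' ?_
  filter_upwards [eventually_gt_atTop 0] with u hu
  have h₁ := (hΛpos _ (rpow_pos_of_pos (mul_pos hx hu) (1 / ρ))).ne'
  have h₂ := (hΛpos _ (rpow_pos_of_pos hu (1 / ρ))).ne'
  field_simp

theorem eventually_rpow_le_comp_mul (hΛ : RegVary Λ α) (hΛpos : ∀ x, 0 < x → 0 < Λ x)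
    (hρ : 0 < ρ) (hIstar : 0 < Istar) (hG : ∀ u, 0 < G u)
    (htail : Tendsto (fun u => log (G u) / Λ (u ^ (1 / ρ))) atTop (𝓝 (-Istar)))
    {x γ : ℝ} (hx : 0 < x) (hγ : x ^ (α / ρ) < γ) :
    ∀ᶠ u in atTop, G u ^ γ ≤ G (x * u) := by
  have hneg : ∀ᶠ u in atTop, log (G u) < 0 := by
    filter_upwards [htail.eventually (eventually_lt_nhds (neg_neg_of_pos hIstar)),
      eventually_gt_atTop 0] with u hu hu0
    simpa using (div_lt_iff₀ (hΛpos _ (rpow_pos_of_pos hu0 (1 / ρ)))).1 hu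
  filter_upwards [(hΛ.tendsto_log_comp_mul_div_log hΛpos hρ hIstar.ne' htail hx).eventually
    (eventually_le_nhds hγ), hneg] with u hratio hu
  rw [← log_le_log_iff (rpow_pos_of_pos (hG u) γ) (hG _), log_rpow (hG u)]
  exact (div_le_iff_of_neg hu).1 hratio

end RegVary

theorem eventually_le_rpow_neg_of_tendsto_log_div {G Λ : ℝ → ℝ} {ρ Istar c ε : ℝ}
    (hG : ∀ u, 0 < G u) (hρ : 0 < ρ) (hIstar : 0 < Istar) (hc : 0 < c) (hε : 0 < ε)
    (hΛ : ∀ᶠ t in atTop, c * t ^ ε ≤ Λ t)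
    (htail : Tendsto (fun u => log (G u) / Λ (u ^ (1 / ρ))) atTop (𝓝 (-Istar))) (r : ℝ) :
    ∀ᶠ u in atTop, G u ≤ u ^ (-r) := by
  have hlog : ∀ᶠ u in atTop, ‖r * log u‖ ≤ Istar * c / 2 * ‖u ^ (ε / ρ)‖ :=
    ((isLittleO_log_rpow_atTop (div_pos hε hρ)).const_mul_left r).bound (by positivity)
  filter_upwards [htail.eventually (eventually_le_nhds (by linarith : -Istar < -Istar / 2)),
    (tendsto_rpow_atTop (by positivity : 0 < 1 / ρ)).eventually hΛ, hlog, eventually_gt_atTop 0]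
    with u hdiv hΛu hlogu hu
  rw [← rpow_mul hu.le, one_div_mul_eq_div] at hΛu
  rw [norm_of_nonneg (rpow_nonneg hu.le _)] at hlogu
  have hΛpos : 0 < Λ (u ^ (1 / ρ)) := (mul_pos hc (rpow_pos_of_pos hu _)).trans_le hΛu
  rw [← log_le_log_iff (hG u) (rpow_pos_of_pos hu _), log_rpow hu]
  calc log (G u) ≤ -Istar / 2 * Λ (u ^ (1 / ρ)) := by
        linarith [(div_le_iff₀ hΛpos).1 hdiv]
    _ ≤ -Istar / 2 * (c * u ^ (ε / ρ)) := mul_le_mul_of_nonpos_left hΛu (by linarith)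
    _ ≤ -r * log u := by linarith [le_norm_self (r * log u)]

section Moments

variable {Ω : Type*} [MeasurableSpace Ω] {μ : Measure Ω} [IsFiniteMeasure μ]

theorem memLp_two_of_tail_le_rpow {X : Ω → ℝ} (hX : AEMeasurable X μ) (hX0 : 0 ≤ᵐ[μ] X)
    {r : ℝ} (hr : 2 < r) (htail : ∀ᶠ t in atTop, μ.real {ω | t < X ω} ≤ t ^ (-r)) :
    MemLp X 2 μ := by
  obtain ⟨T, hT⟩ := eventually_atTop.1 (htail.and (eventually_gt_atTop 0))
  have hT0 : 0 < T := (hT T le_rfl).2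
  rw [memLp_two_iff_integrable_sq hX.aestronglyMeasurable]
  refine ⟨(hX.pow_const 2).aestronglyMeasurable, ?_⟩
  rw [hasFiniteIntegral_iff_ofReal (hX0.mono fun ω _ => sq_nonneg (X ω))]
  simp_rw [← rpow_two]
  rw [lintegral_rpow_eq_lintegral_meas_lt_mul μ hX0 hX two_pos]
  norm_num only [rpow_one]
  refine ENNReal.mul_lt_top ENNReal.ofReal_lt_top ?_
  rw [← Ioc_union_Ioi_eq_Ioi hT0.le]
  refine (lintegral_union_le _ _ _).trans_lt (ENNReal.add_lt_top.2 ⟨?_, ?_⟩)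
  · calc ∫⁻ t in Ioc 0 T, μ {ω | t < X ω} * ENNReal.ofReal t
        ≤ ∫⁻ t in Ioc 0 T, μ univ * ENNReal.ofReal T :=
          setLIntegral_mono' measurableSet_Ioc fun t ht => by gcongr; exacts [subset_univ _, ht.2]
      _ < ⊤ := by simp [ENNReal.mul_lt_top, measure_lt_top]
  · calc ∫⁻ t in Ioi T, μ {ω | t < X ω} * ENNReal.ofReal t
        ≤ ∫⁻ t in Ioi T, ENNReal.ofReal (t ^ (1 - r)) := by
          refine setLIntegral_mono' measurableSet_Ioi fun t ht => ?_
          have ht0 : 0 < t := hT0.trans ht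
          rw [← ofReal_measureReal, ← ENNReal.ofReal_mul measureReal_nonneg]
          gcongr
          calc μ.real {ω | t < X ω} * t ≤ t ^ (-r) * t ^ (1 : ℝ) := by
                rw [rpow_one]; gcongr; exact (hT t ht.le).1
            _ = t ^ (1 - r) := by rw [← rpow_add ht0]; ring_nf
      _ < ⊤ := (integrableOn_Ioi_rpow_of_lt (by linarith) hT0).lintegral_lt_top

theorem memLp_two_max_sub_of_tail_le_rpow {Z : Ω → ℝ} (hZ : Measurable Z) {r : ℝ} (hr : 2 < r)
    (htail : ∀ᶠ t in atTop, μ.real {ω | t < Z ω} ≤ t ^ (-r)) (v : ℝ) :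
    MemLp (fun ω => max (Z ω - v) 0) 2 μ := by
  have hposPart : MemLp (fun ω => max (Z ω) 0) 2 μ := by
    refine memLp_two_of_tail_le_rpow (hZ.max measurable_const).aemeasurable
      (ae_of_all _ fun ω => le_max_right _ _) hr ?_
    filter_upwards [htail, eventually_gt_atTop 0] with t ht ht0
    simpa only [lt_max_iff, lt_asymm ht0, or_false] using ht
  refine (hposPart.add (memLp_const |v|)).of_le
    ((hZ.sub_const v).max measurable_const).aestronglyMeasurable (ae_of_all _ fun ω => ?_)
  have hZv : 0 ≤ max (Z ω) 0 + |v| := by positivity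
  rw [norm_of_nonneg (le_max_right _ _), Pi.add_apply, norm_of_nonneg hZv]
  exact max_le (by linarith [le_max_left (Z ω) 0, neg_abs_le v]) hZv

theorem min_measureReal_mul_le_variance {Y : Ω → ℝ} (hY : MemLp Y 2 μ) {a b : ℝ} (hab : a < b) :
    min (μ.real {ω | Y ω ≤ a}) (μ.real {ω | b ≤ Y ω}) * ((b - a) / 2) ^ 2 ≤ variance Y μ := by
  have hc : 0 < (b - a) / 2 := by linarith
  -- Whichever side of the midpoint the mean lies on, the opposite event deviates by `(b - a) / 2`.
  have hdev : min (μ.real {ω | Y ω ≤ a}) (μ.real {ω | b ≤ Y ω}) ≤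
      μ.real {ω | (b - a) / 2 ≤ |Y ω - μ[Y]|} := by
    rcases le_total μ[Y] ((a + b) / 2) with hm | hm
    · refine (min_le_right _ _).trans (measureReal_mono fun ω (hω : b ≤ Y ω) => ?_)
      exact le_abs.2 (Or.inl (by linarith : (b - a) / 2 ≤ Y ω - μ[Y]))
    · refine (min_le_left _ _).trans (measureReal_mono fun ω (hω : Y ω ≤ a) => ?_)
      exact le_abs.2 (Or.inr (by linarith : (b - a) / 2 ≤ -(Y ω - μ[Y])))
  have hcheb := ENNReal.toReal_le_of_le_ofReal
    (div_nonneg (variance_nonneg _ _) (by positivity)) (meas_ge_le_variance_div_sq hY hc)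
  rw [← le_div_iff₀ (by positivity)]
  exact hdev.trans hcheb

theorem mul_sq_le_variance_max_sub {Z : Ω → ℝ} {v b p : ℝ}
    (hL2 : MemLp (fun ω => max (Z ω - v) 0) 2 μ) (hb : 0 < b)
    (hle : p ≤ μ.real {ω | Z ω ≤ v}) (hge : p ≤ μ.real {ω | v + b ≤ Z ω}) :
    p * (b / 2) ^ 2 ≤ variance (fun ω => max (Z ω - v) 0) μ := by
  have h := min_measureReal_mul_le_variance hL2 hb
  have hle' : {ω | max (Z ω - v) 0 ≤ 0} = {ω | Z ω ≤ v} := by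
    ext ω; simp
  have hge' : {ω | b ≤ max (Z ω - v) 0} = {ω | v + b ≤ Z ω} := by
    ext ω; simp [hb.not_ge, le_sub_iff_add_le']
  rw [hle', hge', sub_zero] at h
  exact (mul_le_mul_of_nonneg_right (le_min hle hge) (by positivity)).trans h

end Moments

theorem isLeast_sInf_le_cdf (ν : Measure ℝ) {y : ℝ} (hy0 : 0 < y) (hy1 : y < 1) :
    IsLeast {u | y ≤ cdf ν u} (sInf {u | y ≤ cdf ν u}) := by
  set S := {u | y ≤ cdf ν u}
  have hne : S.Nonempty := ((tendsto_cdf_atTop ν).eventually (eventually_ge_nhds hy1)).exists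
  obtain ⟨l, hl⟩ := ((tendsto_cdf_atBot ν).eventually (eventually_lt_nhds hy0)).exists
  have hbdd : BddBelow S := ⟨l, fun u (hu : y ≤ cdf ν u) =>
    le_of_not_gt fun hul => ((monotone_cdf ν hul.le).trans_lt hl).not_ge hu⟩
  refine ⟨?_, fun u hu => csInf_le hbdd hu⟩
  refine ge_of_tendsto (((cdf ν).right_continuous (sInf S)).mono Ioi_subset_Ici_self) ?_
  filter_upwards [self_mem_nhdsWithin] with u hu
  obtain ⟨s, hs, hsu⟩ := exists_lt_of_csInf_lt hne hu
  exact hs.trans (monotone_cdf ν hsu.le)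

section VaR

variable {Ω : Type*} [MeasurableSpace Ω] {μ : Measure Ω} [IsProbabilityMeasure μ] {Z : Ω → ℝ}

theorem cdf_map_eq_measureReal (hZ : Measurable Z) (u : ℝ) :
    cdf (μ.map Z) u = μ.real {ω | Z ω ≤ u} := by
  have := Measure.isProbabilityMeasure_map (μ := μ) hZ.aemeasurable
  rw [cdf_eq_real, map_measureReal_apply hZ measurableSet_Iic]
  rfl

theorem isLeast_VaR (hZ : Measurable Z) {β : ℝ} (hβ0 : 0 < β) (hβ1 : β < 1) :
    IsLeast {u | 1 - β ≤ μ.real {ω | Z ω ≤ u}} (VaR μ Z β) := by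
  have h := isLeast_sInf_le_cdf (μ.map Z) (y := 1 - β) (by linarith) (by linarith)
  simp only [cdf_map_eq_measureReal hZ] at h
  exact h

theorem lt_VaR_iff (hZ : Measurable Z) {β : ℝ} (hβ0 : 0 < β) (hβ1 : β < 1) {u : ℝ} :
    u < VaR μ Z β ↔ β < μ.real {ω | u < Z ω} := by
  have hcompl : μ.real {ω | u < Z ω} = 1 - μ.real {ω | Z ω ≤ u} := by
    rw [← probReal_compl_eq_one_sub (μ := μ) (measurableSet_le hZ measurable_const)]
    simp only [compl_ofPred, not_le]
  have hVaR := isLeast_VaR (μ := μ) hZ hβ0 hβ1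
  rw [hcompl]
  constructor
  · intro hu
    by_contra! hle
    exact hu.not_ge (hVaR.2 (show 1 - β ≤ μ.real {ω | Z ω ≤ u} by linarith))
  · intro h
    by_contra! hle
    have : 1 - β ≤ μ.real {ω | Z ω ≤ u} :=
      hVaR.1.out.trans (measureReal_mono fun ω (hω : Z ω ≤ _) => hω.trans hle)
    linarith

theorem rpow_le_variance_max_sub_VaR (hZ : Measurable Z) {β γ u u' : ℝ} (hβ0 : 0 < β)
    (hβ : β ≤ 1 / 2) (hγ : 1 ≤ γ) (hL2 : MemLp (fun ω => max (Z ω - VaR μ Z β) 0) 2 μ)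
    (hu : u < VaR μ Z β) (hdil : μ.real {ω | u < Z ω} ^ γ ≤ μ.real {ω | u' < Z ω})
    (hgap : VaR μ Z β + 2 ≤ u') :
    β ^ γ ≤ variance (fun ω => max (Z ω - VaR μ Z β) 0) μ := by
  have hright : β ^ γ ≤ μ.real {ω | VaR μ Z β + 2 ≤ Z ω} := calc
    β ^ γ ≤ μ.real {ω | u < Z ω} ^ γ := by
      gcongr; exact ((lt_VaR_iff hZ hβ0 (by linarith)).1 hu).le
    _ ≤ μ.real {ω | u' < Z ω} := hdil
    _ ≤ _ := measureReal_mono fun ω (hω : u' < Z ω) => hgap.trans hω.le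
  have hleft : β ^ γ ≤ μ.real {ω | Z ω ≤ VaR μ Z β} := calc
    β ^ γ ≤ β ^ (1 : ℝ) := rpow_le_rpow_of_exponent_ge hβ0 (by linarith) hγ
    _ ≤ 1 - β := by rw [rpow_one]; linarith
    _ ≤ _ := (isLeast_VaR hZ hβ0 (by linarith)).1
  simpa using mul_sq_le_variance_max_sub hL2 two_pos hleft hright

end VaR

theorem stmt8_general
    {Ω : Type*} [MeasurableSpace Ω] (μ : Measure Ω) [IsProbabilityMeasure μ]
    (Z : Ω → ℝ) (hZ : Measurable Z)
    (hpos : ∀ u : ℝ, 0 < (μ {ω | u < Z ω}).toReal)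
    (ρ α Istar : ℝ) (hρ : 0 < ρ) (hα : 0 < α) (hIstar : 0 < Istar)
    (Λ : ℝ → ℝ) (hΛpos : ∀ x : ℝ, 0 < x → 0 < Λ x)
    (hΛmono : ∃ x₀ : ℝ, StrictMonoOn Λ (Set.Ici x₀))
    (hΛRV : RegVary Λ α)
    (htail : Tendsto (fun u : ℝ => Real.log ((μ {ω | u < Z ω}).toReal) / Λ (u ^ (1 / ρ)))
      atTop (𝓝 (-Istar))) :
    ∀ δ : ℝ, 0 < δ → ∃ β₀ : ℝ, 0 < β₀ ∧ ∀ β : ℝ, 0 < β → β < β₀ →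
      β ^ (-(1 : ℝ) + δ) ≤
        β ^ (-(2 : ℝ)) * variance (fun ω => max (Z ω - VaR μ Z β) 0) μ := by
  intro δ hδ
  obtain ⟨x₀, hx₀⟩ := hΛmono
  obtain ⟨c, hc, hΛc⟩ :=
    hΛRV.exists_const_mul_rpow_le hΛpos hx₀.monotoneOn (half_pos hα).le (half_lt_self hα)
  have hL2 := memLp_two_max_sub_of_tail_le_rpow (μ := μ) hZ (by norm_num : (2 : ℝ) < 3)
    (eventually_le_rpow_neg_of_tendsto_log_div hpos hρ hIstar hc (half_pos hα) hΛc htail 3)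
  obtain ⟨C, hC1, hdil⟩ : ∃ C > 1, ∀ᶠ u in atTop,
      μ.real {ω | u < Z ω} ^ (1 + δ) ≤ μ.real {ω | C * u < Z ω} := by
    refine ⟨(1 + δ / 2) ^ (ρ / α), one_lt_rpow (by linarith) (div_pos hρ hα),
      hΛRV.eventually_rpow_le_comp_mul hΛpos hρ hIstar hpos htail (by positivity) ?_⟩
    rw [← rpow_mul (by linarith), div_mul_div_cancel₀ hα.ne', div_self hρ.ne', rpow_one]
    linarith
  obtain ⟨U, hU⟩ := eventually_atTop.1 hdil
  set w := max (U + 1) ((C + 2) / (C - 1))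
  refine ⟨min (μ.real {ω | w < Z ω}) (1 / 2), lt_min (hpos w) one_half_pos, fun β hβ hβw => ?_⟩
  have hβ1 : β < 1 / 2 := hβw.trans_le (min_le_right _ _)
  have hwv : w < VaR μ Z β :=
    (lt_VaR_iff hZ hβ (by linarith)).2 (hβw.trans_le (min_le_left _ _))
  have hgap : VaR μ Z β + 2 ≤ C * (VaR μ Z β - 1) := by
    have := (div_le_iff₀ (by linarith)).1 ((le_max_right _ _).trans hwv.le)
    nlinarith
  have hUv : U ≤ VaR μ Z β - 1 := by linarith [le_max_left (U + 1) ((C + 2) / (C - 1))]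
  calc β ^ (-(1 : ℝ) + δ) = β ^ (-(2 : ℝ)) * β ^ (1 + δ) := by rw [← rpow_add hβ]; ring_nf
    _ ≤ β ^ (-(2 : ℝ)) * variance (fun ω => max (Z ω - VaR μ Z β) 0) μ := by
        gcongr
        exact rpow_le_variance_max_sub_VaR hZ hβ hβ1.le (by linarith) (hL2 _) (sub_one_lt _)
          (hU _ hUv) hgap

/-- the naive asymptotic CVaR variance
`σ_c²(β) = β^{−2} Var[(L(X) − v_β)^+]` satisfies `σ_c²(β) ≥ β^{−1+δ}`
eventually as `β → 0`. -/
theorem stmt8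
    {Ω : Type*} [MeasurableSpace Ω] (μ : Measure Ω) [IsProbabilityMeasure μ]
    (Z : Ω → ℝ) (hZ : Measurable Z)
    (hpos : ∀ u : ℝ, 0 < (μ {ω | u < Z ω}).toReal)
    (ρ α Istar : ℝ) (hρ : 0 < ρ) (hα : 0 < α) (hIstar : 0 < Istar)
    (Λ : ℝ → ℝ) (hΛpos : ∀ x : ℝ, 0 < x → 0 < Λ x)
    (hΛmono : ∃ x₀ : ℝ, StrictMonoOn Λ (Set.Ici x₀))
    (hΛtop : Tendsto Λ atTop atTop)
    (hΛRV : RegVary Λ α)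
    (htail : Tendsto (fun u : ℝ => Real.log ((μ {ω | u < Z ω}).toReal) / Λ (u ^ (1 / ρ)))
      atTop (𝓝 (-Istar))) :
    ∀ δ : ℝ, 0 < δ → ∃ β₀ : ℝ, 0 < β₀ ∧ ∀ β : ℝ, 0 < β → β < β₀ →
      β ^ (-(1 : ℝ) + δ) ≤
        β ^ (-(2 : ℝ)) * variance (fun ω => max (Z ω - VaR μ Z β) 0) μ :=
  stmt8_general μ Z hZ hpos ρ α Istar hρ hα hIstar Λ hΛpos hΛmono hΛRV htail
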